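/- Let n, p, k be integers with 0 ≤ k < p−1, p < n and n−p+k > p, and suppose that k and p are even. Let σ_p : ℝ^n → ℝ^n be the involution that negates the first p coordinates: σ_p(u) = (−u_1,…,−u_p, u_{p+1},…,u_n). Then σ_p maps R(n,p,k) onto itself, and its restriction to R(n,p,k) is isotopic to the identity: there is a continuous map H : R(n,p,k) × [0,1] → R(n,p,k) with H(u,0) = u and H(u,1) = σ_p(u) for all u, such that for every t ∈ [0,1] the map u ↦ H(u,t) is a homeomorphism of R(n,p,k). -/

import Mathlib

open Metric

/-- The intersection of two quadrics in ℝⁿ associated to the polytope `P_k`: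
`u₁² + ⋯ + u_p² = p` and `u₁² + ⋯ + u_k² + u_{p+1}² + ⋯ + u_n² = n - p + k`. -/
def quadR (n p k : ℕ) : Set (EuclideanSpace ℝ (Fin n)) :=
  {u | (∑ j : Fin n, if (j : ℕ) < p then u j ^ 2 else 0) = (p : ℝ) ∧
       (∑ j : Fin n, if (j : ℕ) < k ∨ p ≤ (j : ℕ) then u j ^ 2 else 0) = (n : ℝ) - p + k}

/-- The involution of ℝⁿ negating the first `p` coordinates. -/
def sigmaP (n p : ℕ) : EuclideanSpace ℝ (Fin n) → EuclideanSpace ℝ (Fin n) :=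
  fun u => WithLp.toLp 2 (fun j => if (j : ℕ) < p then -u j else u j)

/-!
Pair the first `p` coordinates into the planes `{2i, 2i + 1}` and rotate all of them
simultaneously by an angle `θ`. Because `k` and `p` are even, each block of coordinates summed in
the two equations of `R(n,p,k)` is a union of whole planes, so every such rotation preserves
`R(n,p,k)`. The rotations form a flow of `ℝ` on `ℝⁿ`, and the rotation by `π` is `σ_p`; running
the flow from `0` to `π` is the isotopy.
-/

open Function

-- `τ` splits the coordinates into fixed ones and planes `{j, τ j}`; `s` orients each plane.
structure IsPlanePairing {ι : Type*} (τ : ι → ι) (s : ι → ℝ) : Prop where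
  involutive : Involutive τ
  sign_swap : ∀ j, τ j ≠ j → s (τ j) = -s j
  sign_sq : ∀ j, s j ^ 2 = 1

theorem Function.Involutive.sum_eq_of_add_comp_eq {ι : Type*} [Fintype ι] {τ : ι → ι}
    (hτ : Involutive τ) {F G : ι → ℝ} (h : ∀ j, F j + F (τ j) = G j + G (τ j)) :
    ∑ j, F j = ∑ j, G j := by
  have hF : ∑ j, F (τ j) = ∑ j, F j := Equiv.sum_comp (hτ.toPerm τ) F
  have hG : ∑ j, G (τ j) = ∑ j, G j := Equiv.sum_comp (hτ.toPerm τ) G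
  have hsum : ∑ j, (F j + F (τ j)) = ∑ j, (G j + G (τ j)) := Finset.sum_congr rfl fun j _ => h j
  rw [Finset.sum_add_distrib, Finset.sum_add_distrib, hF, hG] at hsum
  linarith

section PairRotation

variable {ι : Type*} [DecidableEq ι] {τ : ι → ι} {s : ι → ℝ}

variable (τ s) in
noncomputable def pairRotation (θ : ℝ) (u : EuclideanSpace ℝ ι) : EuclideanSpace ℝ ι :=
  WithLp.toLp 2 fun j => if τ j = j then u j else Real.cos θ * u j + Real.sin θ * s j * u (τ j)

theorem pairRotation_of_eq (θ : ℝ) (u : EuclideanSpace ℝ ι) {j : ι} (hj : τ j = j) :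
    pairRotation τ s θ u j = u j := by
  simp [pairRotation, hj]

theorem pairRotation_of_ne (θ : ℝ) (u : EuclideanSpace ℝ ι) {j : ι} (hj : τ j ≠ j) :
    pairRotation τ s θ u j = Real.cos θ * u j + Real.sin θ * s j * u (τ j) := by
  simp [pairRotation, hj]

theorem IsPlanePairing.pairRotation_swap (hP : IsPlanePairing τ s) (θ : ℝ)
    (u : EuclideanSpace ℝ ι) {j : ι} (hj : τ j ≠ j) :
    pairRotation τ s θ u (τ j) = Real.cos θ * u (τ j) - Real.sin θ * s j * u j := by
  have hτj : τ (τ j) ≠ τ j := by rw [hP.involutive j]; exact hj.symm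
  rw [pairRotation_of_ne θ u hτj, hP.involutive j, hP.sign_swap j hj]
  ring

theorem pairRotation_zero (u : EuclideanSpace ℝ ι) : pairRotation τ s 0 u = u := by
  ext j
  simp [pairRotation]

theorem IsPlanePairing.pairRotation_add (hP : IsPlanePairing τ s) (θ φ : ℝ)
    (u : EuclideanSpace ℝ ι) :
    pairRotation τ s (θ + φ) u = pairRotation τ s θ (pairRotation τ s φ u) := by
  ext j
  by_cases hj : τ j = j
  · simp only [pairRotation_of_eq _ _ hj]
  · rw [pairRotation_of_ne _ _ hj, pairRotation_of_ne _ _ hj, pairRotation_of_ne _ _ hj,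
      hP.pairRotation_swap _ _ hj, Real.cos_add, Real.sin_add]
    linear_combination Real.sin θ * Real.sin φ * u j * hP.sign_sq j

theorem continuous_pairRotation : Continuous (uncurry (pairRotation τ s)) := by
  refine (PiLp.continuous_toLp 2 _).comp (continuous_pi fun j => ?_)
  by_cases hj : τ j = j
  · simp only [hj, if_true]
    fun_prop
  · simp only [hj, if_false]
    fun_prop

variable (τ s) in
noncomputable def pairRotationFlow (hP : IsPlanePairing τ s) : Flow ℝ (EuclideanSpace ℝ ι) where
  toFun := pairRotation τ s
  cont' := continuous_pairRotation
  map_add' := hP.pairRotation_add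
  map_zero' := pairRotation_zero

theorem pairRotation_pi (u : EuclideanSpace ℝ ι) :
    pairRotation τ s Real.pi u = WithLp.toLp 2 fun j => if τ j = j then u j else -u j := by
  ext j
  by_cases hj : τ j = j <;> simp [pairRotation, hj]

theorem IsPlanePairing.sq_pairRotation_add_sq_swap (hP : IsPlanePairing τ s) (θ : ℝ)
    (u : EuclideanSpace ℝ ι) (j : ι) :
    pairRotation τ s θ u j ^ 2 + pairRotation τ s θ u (τ j) ^ 2 = u j ^ 2 + u (τ j) ^ 2 := by
  by_cases hj : τ j = j
  · rw [hj, pairRotation_of_eq _ _ hj]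
  · rw [pairRotation_of_ne _ _ hj, hP.pairRotation_swap _ _ hj]
    linear_combination (Real.sin θ ^ 2 * (u j ^ 2 + u (τ j) ^ 2)) * hP.sign_sq j
      + (u j ^ 2 + u (τ j) ^ 2) * Real.cos_sq_add_sin_sq θ

theorem IsPlanePairing.sum_sq_pairRotation [Fintype ι] (hP : IsPlanePairing τ s) (θ : ℝ)
    (u : EuclideanSpace ℝ ι) (P : ι → Prop) [DecidablePred P] (hPτ : ∀ j, P (τ j) ↔ P j) :
    (∑ j, if P j then pairRotation τ s θ u j ^ 2 else 0) = ∑ j, if P j then u j ^ 2 else 0 := by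
  refine hP.involutive.sum_eq_of_add_comp_eq fun j => ?_
  by_cases hj : P j
  · simp only [hj, (hPτ j).2 hj, if_true]
    exact hP.sq_pairRotation_add_sq_swap θ u j
  · simp [hj, mt (hPτ j).1 hj]

end PairRotation

theorem Flow.exists_isotopy {α : Type*} [TopologicalSpace α] (ϕ : Flow ℝ α) (T : ℝ) :
    ∃ H : α × unitInterval → α, Continuous H ∧ (∀ x, H (x, 0) = x) ∧
      (∀ x, H (x, 1) = ϕ T x) ∧ ∀ t, IsHomeomorph fun x => H (x, t) :=
  ⟨fun x => ϕ (T * x.2) x.1, by fun_prop, fun x => by simp [ϕ.map_zero_apply],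
    fun x => by simp, fun t => (ϕ.toHomeomorph (T * t)).isHomeomorph⟩

def pairSwap (p j : ℕ) : ℕ := if j < p then (if j % 2 = 0 then j + 1 else j - 1) else j

theorem pairSwap_lt_iff {p m : ℕ} (hm : Even m) (j : ℕ) : pairSwap p j < m ↔ j < m := by
  rw [Nat.even_iff] at hm
  unfold pairSwap
  split_ifs <;> omega

theorem pairSwap_pairSwap {p : ℕ} (hp : Even p) (j : ℕ) : pairSwap p (pairSwap p j) = j := by
  rw [Nat.even_iff] at hp
  unfold pairSwap
  split_ifs <;> omega

theorem pairSwap_eq_self_iff {p j : ℕ} : pairSwap p j = j ↔ p ≤ j := by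
  unfold pairSwap
  split_ifs <;> omega

theorem neg_one_pow_pairSwap {p j : ℕ} (hj : j < p) :
    (-1 : ℝ) ^ pairSwap p j = -(-1) ^ j := by
  have hpar : pairSwap p j % 2 = 1 - j % 2 := by
    unfold pairSwap
    split_ifs <;> omega
  rw [neg_one_pow_eq_pow_mod_two, hpar, neg_one_pow_eq_pow_mod_two (n := j)]
  rcases Nat.mod_two_eq_zero_or_one j with h | h <;> simp [h]

def finPairSwap {n p : ℕ} (hpn : p < n) (j : Fin n) : Fin n :=
  ⟨pairSwap p j, by unfold pairSwap; split_ifs <;> omega⟩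

theorem isPlanePairing_finPairSwap {n p : ℕ} (hpn : p < n) (hp : Even p) :
    IsPlanePairing (finPairSwap hpn) fun j => (-1) ^ (j : ℕ) where
  involutive j := Fin.ext (pairSwap_pairSwap hp j)
  sign_swap j hj := neg_one_pow_pairSwap <| not_le.1 fun h =>
    hj (Fin.ext (pairSwap_eq_self_iff.2 h))
  sign_sq j := by rw [← pow_mul, mul_comm, pow_mul, neg_one_sq, one_pow]

theorem pairRotation_finPairSwap_pi {n p : ℕ} (hpn : p < n) (s : Fin n → ℝ)
    (u : EuclideanSpace ℝ (Fin n)) :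
    pairRotation (finPairSwap hpn) s Real.pi u = sigmaP n p u := by
  have hfix (j : Fin n) : finPairSwap hpn j = j ↔ ¬ (j : ℕ) < p := by
    rw [Fin.ext_iff, not_lt]; exact pairSwap_eq_self_iff
  ext j
  by_cases hj : (j : ℕ) < p <;> simp [pairRotation_pi, sigmaP, hfix, hj]

theorem isInvariant_quadR {n p k : ℕ} (hpn : p < n) (hk : Even k) (hp : Even p) :
    IsInvariant (pairRotationFlow _ _ (isPlanePairing_finPairSwap hpn hp)) (quadR n p k) := by
  have hlt {m : ℕ} (hm : Even m) (j : Fin n) : ((finPairSwap hpn j : Fin n) : ℕ) < m ↔ j < m :=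
    pairSwap_lt_iff hm j
  rintro θ u ⟨h₁, h₂⟩
  refine ⟨?_, ?_⟩
  · rw [← h₁]
    exact (isPlanePairing_finPairSwap hpn hp).sum_sq_pairRotation θ u _ (hlt hp)
  · rw [← h₂]
    refine (isPlanePairing_finPairSwap hpn hp).sum_sq_pairRotation θ u _ fun j => ?_
    rw [hlt hk, ← not_lt, hlt hp, not_lt]

theorem stmt2 (n p k : ℕ) (hpn : p < n) (hke : Even k) (hpe : Even p) :
    sigmaP n p '' quadR n p k = quadR n p k ∧
    ∃ H : quadR n p k × unitInterval → quadR n p k,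
      Continuous H ∧
      (∀ u : quadR n p k, H (u, 0) = u) ∧
      (∀ u : quadR n p k, (H (u, 1) : EuclideanSpace ℝ (Fin n)) = sigmaP n p u) ∧
      (∀ t : unitInterval, IsHomeomorph (fun u : quadR n p k => H (u, t))) := by
  set ϕ := pairRotationFlow _ _ (isPlanePairing_finPairSwap hpn hpe)
  have hinv : IsInvariant ϕ (quadR n p k) := isInvariant_quadR hpn hke hpe
  have hσ : ϕ Real.pi = sigmaP n p := funext (pairRotation_finPairSwap_pi hpn _)
  refine ⟨hσ ▸ (ϕ.isInvariant_iff_image_eq _).1 hinv Real.pi, ?_⟩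
  obtain ⟨H, hH, h0, h1, hhom⟩ := (ϕ.restrict hinv).exists_isotopy Real.pi
  exact ⟨H, hH, h0, fun u => by rw [h1, Flow.coe_restrict_apply, hσ], hhom⟩
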